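/- arXiv:math/9910006 — 2 statements merged into one kernel-verified Lean document; each statement's English description precedes it below -/
import Mathlib

section
/- A category carrying two compatible strict monoidal structures is braided (the categorified Eckmann–Hilton argument): let C be a category with two strict monoidal structures (⊗, I) and (Φ, I) sharing the unit object I, and let δ be an interchange family as described. Then: (i) the morphisms δ_{A,I,I,B} : A ⊗ B → A Φ B constitute a natural isomorphism between the two tensor product functors; and (ii) the morphisms γ_{A,B} := δ_{I,B,A,I}^{-1} ∘ δ_{A,I,I,B} : A ⊗ B → B ⊗ A constitute a braiding on (C, ⊗, I): γ is a natural isomorphism and satisfies γ_{A⊗B,C} = (γ_{A,C} ⊗ id_B) ∘ (id_A ⊗ γ_{B,C}) and γ_{A,B⊗C} = (id_B ⊗ γ_{A,C}) ∘ (γ_{A,B} ⊗ id_C) for all objects A, B, C. -/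
open CategoryTheory

universe v u

namespace EH

/-- A strict monoidal structure on a category `C`: a tensor product bifunctor together
with a unit object, such that associativity and unitality hold on the nose (both on
objects and on morphisms). -/
structure StrictMonoidalStruct (C : Type u) [Category.{v} C] where
  tensorObj : C → C → C
  tensorHom : ∀ {A A' B B' : C}, (A ⟶ A') → (B ⟶ B') → (tensorObj A B ⟶ tensorObj A' B')
  unit : C
  tensor_id : ∀ A B : C, tensorHom (𝟙 A) (𝟙 B) = 𝟙 (tensorObj A B)
  tensor_comp : ∀ {A A' A'' B B' B'' : C} (f : A ⟶ A') (f' : A' ⟶ A'')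
    (g : B ⟶ B') (g' : B' ⟶ B''),
    tensorHom (f ≫ f') (g ≫ g') = tensorHom f g ≫ tensorHom f' g'
  assoc_obj : ∀ A B P : C, tensorObj (tensorObj A B) P = tensorObj A (tensorObj B P)
  unit_left : ∀ A : C, tensorObj unit A = A
  unit_right : ∀ A : C, tensorObj A unit = A
  assoc_hom : ∀ {A A' B B' P P' : C} (f : A ⟶ A') (g : B ⟶ B') (h : P ⟶ P'),
    tensorHom (tensorHom f g) h =
      eqToHom (assoc_obj A B P) ≫ tensorHom f (tensorHom g h) ≫
        eqToHom (assoc_obj A' B' P').symm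
  unit_left_hom : ∀ {A A' : C} (f : A ⟶ A'),
    tensorHom (𝟙 unit) f = eqToHom (unit_left A) ≫ f ≫ eqToHom (unit_left A').symm
  unit_right_hom : ∀ {A A' : C} (f : A ⟶ A'),
    tensorHom f (𝟙 unit) = eqToHom (unit_right A) ≫ f ≫ eqToHom (unit_right A').symm

variable {C : Type u} [Category.{v} C]

/-- The comparison morphism `A ⊗ B ⟶ A Φ B` obtained from the interchange isomorphism
`δ_{A,I,I,B}` by inserting the strict unit identifications. -/
def ehD1 (M N : StrictMonoidalStruct C) (hI : N.unit = M.unit)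
    (δ : ∀ A B P R : C,
      M.tensorObj (N.tensorObj A B) (N.tensorObj P R) ≅
        N.tensorObj (M.tensorObj A P) (M.tensorObj B R))
    (A B : C) : M.tensorObj A B ⟶ N.tensorObj A B :=
  eqToHom (show M.tensorObj A B =
      M.tensorObj (N.tensorObj A M.unit) (N.tensorObj M.unit B) by
        rw [← hI, N.unit_right, N.unit_left]) ≫
    (δ A M.unit M.unit B).hom ≫
      eqToHom (show N.tensorObj (M.tensorObj A M.unit) (M.tensorObj M.unit B) =
          N.tensorObj A B by rw [M.unit_right, M.unit_left])

/-- The braiding `γ_{A,B} = δ_{I,B,A,I}⁻¹ ∘ δ_{A,I,I,B} : A ⊗ B ⟶ B ⊗ A` (using the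
strict unit identifications). -/
def ehGamma (M N : StrictMonoidalStruct C) (hI : N.unit = M.unit)
    (δ : ∀ A B P R : C,
      M.tensorObj (N.tensorObj A B) (N.tensorObj P R) ≅
        N.tensorObj (M.tensorObj A P) (M.tensorObj B R))
    (A B : C) : M.tensorObj A B ⟶ M.tensorObj B A :=
  eqToHom (show M.tensorObj A B =
      M.tensorObj (N.tensorObj A M.unit) (N.tensorObj M.unit B) by
        rw [← hI, N.unit_right, N.unit_left]) ≫
    (δ A M.unit M.unit B).hom ≫
      eqToHom (show N.tensorObj (M.tensorObj A M.unit) (M.tensorObj M.unit B) =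
          N.tensorObj (M.tensorObj M.unit A) (M.tensorObj B M.unit) by
            rw [M.unit_right, M.unit_left, M.unit_left, M.unit_right]) ≫
        (δ M.unit B A M.unit).inv ≫
          eqToHom (show M.tensorObj (N.tensorObj M.unit B) (N.tensorObj A M.unit) =
              M.tensorObj B A by rw [← hI, N.unit_left, N.unit_right])

section Helpers

lemma tensor_eqToHom (T : StrictMonoidalStruct C) {A A' B B' : C} (p : A = A') (q : B = B') :
    T.tensorHom (eqToHom p) (eqToHom q) = eqToHom (by rw [p, q]) := by
  subst p; subst q; simp [T.tensor_id]

lemma tensor_eqToHom_comp_left (T : StrictMonoidalStruct C) {A₀ A A' B B' : C}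
    (p : A₀ = A) (f : A ⟶ A') (g : B ⟶ B') :
    T.tensorHom (eqToHom p ≫ f) g = eqToHom (by rw [p]) ≫ T.tensorHom f g := by
  conv_lhs => rw [← Category.id_comp g, T.tensor_comp, ← eqToHom_refl B rfl,
    tensor_eqToHom]

lemma tensor_comp_eqToHom_left (T : StrictMonoidalStruct C) {A A' A₁ B B' : C}
    (f : A ⟶ A') (p : A' = A₁) (g : B ⟶ B') :
    T.tensorHom (f ≫ eqToHom p) g = T.tensorHom f g ≫ eqToHom (by rw [p]) := by
  conv_lhs => rw [← Category.comp_id g, T.tensor_comp, ← eqToHom_refl B' rfl,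
    tensor_eqToHom]

lemma tensor_eqToHom_comp_right (T : StrictMonoidalStruct C) {A A' B₀ B B' : C}
    (f : A ⟶ A') (p : B₀ = B) (g : B ⟶ B') :
    T.tensorHom f (eqToHom p ≫ g) = eqToHom (by rw [p]) ≫ T.tensorHom f g := by
  conv_lhs => rw [← Category.id_comp f, T.tensor_comp, ← eqToHom_refl A rfl,
    tensor_eqToHom]

lemma tensor_comp_eqToHom_right (T : StrictMonoidalStruct C) {A A' B B' B₁ : C}
    (f : A ⟶ A') (g : B ⟶ B') (p : B' = B₁) :
    T.tensorHom f (g ≫ eqToHom p) = T.tensorHom f g ≫ eqToHom (by rw [p]) := by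
  conv_lhs => rw [← Category.comp_id f, T.tensor_comp, ← eqToHom_refl A' rfl,
    tensor_eqToHom]

lemma tensor_eqToHom_left (T : StrictMonoidalStruct C) {A A' B B' : C}
    (p : A = A') (g : B ⟶ B') :
    T.tensorHom (eqToHom p) g = eqToHom (by rw [p]) ≫ T.tensorHom (𝟙 A') g := by
  rw [← Category.comp_id (eqToHom p), tensor_eqToHom_comp_left]

lemma tensor_eqToHom_right (T : StrictMonoidalStruct C) {A A' B B' : C}
    (f : A ⟶ A') (p : B = B') :
    T.tensorHom f (eqToHom p) = eqToHom (by rw [p]) ≫ T.tensorHom f (𝟙 B') := by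
  rw [← Category.comp_id (eqToHom p), tensor_eqToHom_comp_right]

lemma tensor_unit_left (T : StrictMonoidalStruct C) {U : C} (hU : T.unit = U)
    {A A' : C} (f : A ⟶ A') :
    T.tensorHom (𝟙 U) f =
      eqToHom (show T.tensorObj U A = A by rw [← hU, T.unit_left]) ≫ f ≫
        eqToHom (show A' = T.tensorObj U A' by rw [← hU, T.unit_left]) := by
  subst hU; exact T.unit_left_hom f

lemma tensor_unit_right (T : StrictMonoidalStruct C) {U : C} (hU : T.unit = U)
    {A A' : C} (f : A ⟶ A') :
    T.tensorHom f (𝟙 U) =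
      eqToHom (show T.tensorObj A U = A by rw [← hU, T.unit_right]) ≫ f ≫
        eqToHom (show A' = T.tensorObj A' U by rw [← hU, T.unit_right]) := by
  subst hU; exact T.unit_right_hom f

lemma deltaCongr {M N : StrictMonoidalStruct C}
    (δ : ∀ A B P R : C,
      M.tensorObj (N.tensorObj A B) (N.tensorObj P R) ≅
        N.tensorObj (M.tensorObj A P) (M.tensorObj B R))
    {A A' B B' P P' R R' : C} (hA : A = A') (hB : B = B') (hP : P = P') (hR : R = R') :
    (δ A B P R).hom =
      eqToHom (by rw [hA, hB, hP, hR]) ≫ (δ A' B' P' R').hom ≫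
        eqToHom (by rw [hA, hB, hP, hR]) := by
  subst hA; subst hB; subst hP; subst hR; simp

lemma NunitL (M N : StrictMonoidalStruct C) (hI : N.unit = M.unit) (X : C) :
    N.tensorObj M.unit X = X := by rw [← hI]; exact N.unit_left X

lemma NunitR (M N : StrictMonoidalStruct C) (hI : N.unit = M.unit) (X : C) :
    N.tensorObj X M.unit = X := by rw [← hI]; exact N.unit_right X

lemma tensor_id_congr_left (T : StrictMonoidalStruct C) {X Y : C} (p : X = Y)
    {B B' : C} (g : B ⟶ B') :
    T.tensorHom (𝟙 X) g =
      eqToHom (by rw [p]) ≫ T.tensorHom (𝟙 Y) g ≫ eqToHom (by rw [p]) := by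
  subst p; simp

lemma tensor_id_congr_right (T : StrictMonoidalStruct C) {X Y : C} (p : X = Y)
    {B B' : C} (g : B ⟶ B') :
    T.tensorHom g (𝟙 X) =
      eqToHom (by rw [p]) ≫ T.tensorHom g (𝟙 Y) ≫ eqToHom (by rw [p]) := by
  subst p; simp

end Helpers
section Core

variable (M N : StrictMonoidalStruct C) (hI : N.unit = M.unit)
  (δ : ∀ A B P R : C,
    M.tensorObj (N.tensorObj A B) (N.tensorObj P R) ≅
      N.tensorObj (M.tensorObj A P) (M.tensorObj B R))


/-- The comparison `B ⊗ A ⟶ A Φ B` coming from `δ_{I,B,A,I}`. -/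
def ehE (A B : C) : M.tensorObj B A ⟶ N.tensorObj A B :=
  eqToHom (show M.tensorObj B A =
      M.tensorObj (N.tensorObj M.unit B) (N.tensorObj A M.unit) by
        rw [NunitL M N hI, NunitR M N hI]) ≫
    (δ M.unit B A M.unit).hom ≫
      eqToHom (show N.tensorObj (M.tensorObj M.unit A) (M.tensorObj B M.unit) =
          N.tensorObj A B by rw [M.unit_left, M.unit_right])

def qM (A B P : C) : M.tensorObj A (N.tensorObj B P) ⟶ N.tensorObj (M.tensorObj A B) P :=
  eqToHom (show M.tensorObj A (N.tensorObj B P) =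
      M.tensorObj (N.tensorObj A M.unit) (N.tensorObj B P) by rw [NunitR M N hI]) ≫
    (δ A M.unit B P).hom ≫
      eqToHom (show N.tensorObj (M.tensorObj A B) (M.tensorObj M.unit P) =
          N.tensorObj (M.tensorObj A B) P by rw [M.unit_left])

def rM (A B P : C) : M.tensorObj (N.tensorObj A P) B ⟶ N.tensorObj (M.tensorObj A B) P :=
  eqToHom (show M.tensorObj (N.tensorObj A P) B =
      M.tensorObj (N.tensorObj A P) (N.tensorObj B M.unit) by rw [NunitR M N hI]) ≫
    (δ A P B M.unit).hom ≫
      eqToHom (show N.tensorObj (M.tensorObj A B) (M.tensorObj P M.unit) =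
          N.tensorObj (M.tensorObj A B) P by rw [M.unit_right])

def sM (A B P : C) : M.tensorObj (N.tensorObj A B) P ⟶ N.tensorObj A (M.tensorObj B P) :=
  eqToHom (show M.tensorObj (N.tensorObj A B) P =
      M.tensorObj (N.tensorObj A B) (N.tensorObj M.unit P) by rw [NunitL M N hI]) ≫
    (δ A B M.unit P).hom ≫
      eqToHom (show N.tensorObj (M.tensorObj A M.unit) (M.tensorObj B P) =
          N.tensorObj A (M.tensorObj B P) by rw [M.unit_right])

def tM (A B P : C) : M.tensorObj B (N.tensorObj A P) ⟶ N.tensorObj A (M.tensorObj B P) :=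
  eqToHom (show M.tensorObj B (N.tensorObj A P) =
      M.tensorObj (N.tensorObj M.unit B) (N.tensorObj A P) by rw [NunitL M N hI]) ≫
    (δ M.unit B A P).hom ≫
      eqToHom (show N.tensorObj (M.tensorObj M.unit A) (M.tensorObj B P) =
          N.tensorObj A (M.tensorObj B P) by rw [M.unit_left])

lemma ehD1_isIso (A B : C) : IsIso (ehD1 M N hI δ A B) := by
  unfold ehD1; infer_instance

lemma ehE_isIso (A B : C) : IsIso (ehE M N hI δ A B) := by
  unfold ehE; infer_instance

lemma ehGamma_isIso (A B : C) : IsIso (ehGamma M N hI δ A B) := by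
  unfold ehGamma; infer_instance

lemma gamma_comp_ehE (A B : C) :
    ehGamma M N hI δ A B ≫ ehE M N hI δ A B = ehD1 M N hI δ A B := by
  unfold ehGamma ehE ehD1
  simp

lemma d1_nat
    (δnat : ∀ {A A' B B' P P' R R' : C} (f : A ⟶ A') (g : B ⟶ B')
      (h : P ⟶ P') (k : R ⟶ R'),
      M.tensorHom (N.tensorHom f g) (N.tensorHom h k) ≫ (δ A' B' P' R').hom =
        (δ A B P R).hom ≫ N.tensorHom (M.tensorHom f h) (M.tensorHom g k))
    {A A' B B' : C} (f : A ⟶ A') (g : B ⟶ B') :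
    M.tensorHom f g ≫ ehD1 M N hI δ A' B' = ehD1 M N hI δ A B ≫ N.tensorHom f g := by
  have h := δnat f (𝟙 M.unit) (𝟙 M.unit) g
  rw [tensor_unit_right N hI f, tensor_unit_left N hI g, tensor_unit_right M rfl f,
      tensor_unit_left M rfl g] at h
  simp only [tensor_eqToHom_comp_left, tensor_eqToHom_comp_right,
    tensor_comp_eqToHom_left, tensor_comp_eqToHom_right, Category.assoc,
    eqToHom_trans, eqToHom_trans_assoc, eqToHom_refl, Category.id_comp,
    Category.comp_id] at h
  have h' := reassoc_of% h
  unfold ehD1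
  rw [← cancel_epi (eqToHom (show M.tensorObj (N.tensorObj A M.unit)
    (N.tensorObj M.unit B) = M.tensorObj A B by rw [← hI, N.unit_right, N.unit_left]))]
  simp only [Category.assoc]
  rw [h']
  simp

lemma e_nat
    (δnat : ∀ {A A' B B' P P' R R' : C} (f : A ⟶ A') (g : B ⟶ B')
      (h : P ⟶ P') (k : R ⟶ R'),
      M.tensorHom (N.tensorHom f g) (N.tensorHom h k) ≫ (δ A' B' P' R').hom =
        (δ A B P R).hom ≫ N.tensorHom (M.tensorHom f h) (M.tensorHom g k))
    {A A' B B' : C} (f : A ⟶ A') (g : B ⟶ B') :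
    M.tensorHom g f ≫ ehE M N hI δ A' B' = ehE M N hI δ A B ≫ N.tensorHom f g := by
  have h := δnat (𝟙 M.unit) g f (𝟙 M.unit)
  rw [tensor_unit_left N hI g, tensor_unit_right N hI f, tensor_unit_left M rfl f,
      tensor_unit_right M rfl g] at h
  simp only [tensor_eqToHom_comp_left, tensor_eqToHom_comp_right,
    tensor_comp_eqToHom_left, tensor_comp_eqToHom_right, Category.assoc,
    eqToHom_trans, eqToHom_trans_assoc, eqToHom_refl, Category.id_comp,
    Category.comp_id] at h
  have h' := reassoc_of% h
  unfold ehE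
  rw [← cancel_epi (eqToHom (show M.tensorObj (N.tensorObj M.unit B)
    (N.tensorObj A M.unit) = M.tensorObj B A by rw [← hI, N.unit_left, N.unit_right]))]
  simp only [Category.assoc]
  rw [h']
  simp

lemma gamma_nat
    (δnat : ∀ {A A' B B' P P' R R' : C} (f : A ⟶ A') (g : B ⟶ B')
      (h : P ⟶ P') (k : R ⟶ R'),
      M.tensorHom (N.tensorHom f g) (N.tensorHom h k) ≫ (δ A' B' P' R').hom =
        (δ A B P R).hom ≫ N.tensorHom (M.tensorHom f h) (M.tensorHom g k))
    {A A' B B' : C} (f : A ⟶ A') (g : B ⟶ B') :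
    M.tensorHom f g ≫ ehGamma M N hI δ A' B' =
      ehGamma M N hI δ A B ≫ M.tensorHom g f := by
  haveI := ehE_isIso M N hI δ A' B'
  rw [← cancel_mono (ehE M N hI δ A' B'), Category.assoc, gamma_comp_ehE,
    Category.assoc, e_nat M N hI δ δnat f g, ← Category.assoc, gamma_comp_ehE,
    d1_nat M N hI δ δnat f g]


section Assoc

variable (δu₃ : ∀ A B : C, (δ A M.unit B M.unit).hom =
      eqToHom (by
        have h2 : ∀ X : C, N.tensorObj X M.unit = X := fun X => by
          rw [← hI]; exact N.unit_right X
        rw [h2, h2, M.unit_left, h2]))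
  (δu₄ : ∀ A B : C, (δ M.unit A M.unit B).hom =
      eqToHom (by
        have h3 : ∀ X : C, N.tensorObj M.unit X = X := fun X => by
          rw [← hI]; exact N.unit_left X
        rw [h3, h3, M.unit_left, h3]))
  (δassocM : ∀ A B P R E F : C,
      M.tensorHom (δ A B P R).hom (𝟙 (N.tensorObj E F)) ≫
          (δ (M.tensorObj A P) (M.tensorObj B R) E F).hom =
        eqToHom (M.assoc_obj (N.tensorObj A B) (N.tensorObj P R) (N.tensorObj E F)) ≫
          M.tensorHom (𝟙 (N.tensorObj A B)) (δ P R E F).hom ≫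
            (δ A B (M.tensorObj P E) (M.tensorObj R F)).hom ≫
              eqToHom (by rw [M.assoc_obj, M.assoc_obj]))

include δu₃ δassocM in
lemma K1 (A B P : C) :
    ehD1 M N hI δ (M.tensorObj A B) P =
      eqToHom (M.assoc_obj A B P) ≫ M.tensorHom (𝟙 A) (ehD1 M N hI δ B P) ≫
        qM M N hI δ A B P := by
  have h := δassocM A M.unit B M.unit M.unit P
  rw [δu₃ A B] at h
  rw [deltaCongr δ rfl (M.unit_left M.unit) rfl rfl] at h
  rw [deltaCongr δ rfl rfl (M.unit_right B) (M.unit_left P)] at h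
  rw [tensor_id_congr_left M (NunitR M N hI A)] at h
  simp only [tensor_eqToHom, tensor_eqToHom_comp_left, tensor_comp_eqToHom_left,
    tensor_eqToHom_comp_right, tensor_comp_eqToHom_right, tensor_eqToHom_left,
    tensor_eqToHom_right, Category.assoc, Category.id_comp, Category.comp_id,
    eqToHom_trans, eqToHom_trans_assoc, eqToHom_refl, M.tensor_id, N.tensor_id] at h
  rw [eqToHom_comp_iff, comp_eqToHom_iff] at h
  unfold ehD1 qM
  rw [h]
  simp only [tensor_eqToHom, tensor_eqToHom_comp_left, tensor_comp_eqToHom_left,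
    tensor_eqToHom_comp_right, tensor_comp_eqToHom_right, tensor_eqToHom_left,
    tensor_eqToHom_right, Category.assoc, Category.id_comp, Category.comp_id,
    eqToHom_trans, eqToHom_trans_assoc, eqToHom_refl, M.tensor_id, N.tensor_id]

include δu₃ δassocM in
lemma K2 (A B P : C) :
    ehE M N hI δ (M.tensorObj A B) P =
      eqToHom (M.assoc_obj P A B).symm ≫ M.tensorHom (ehE M N hI δ A P) (𝟙 B) ≫
        rM M N hI δ A B P := by
  have h := (δassocM M.unit P A M.unit B M.unit).symm
  rw [δu₃ A B] at h
  rw [deltaCongr δ rfl rfl rfl (M.unit_left M.unit)] at h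
  rw [deltaCongr δ (M.unit_left A) (M.unit_right P) rfl rfl] at h
  rw [tensor_id_congr_right M (NunitR M N hI B)] at h
  simp only [tensor_eqToHom, tensor_eqToHom_comp_left, tensor_comp_eqToHom_left,
    tensor_eqToHom_comp_right, tensor_comp_eqToHom_right, tensor_eqToHom_left,
    tensor_eqToHom_right, Category.assoc, Category.id_comp, Category.comp_id,
    eqToHom_trans, eqToHom_trans_assoc, eqToHom_refl, M.tensor_id, N.tensor_id] at h
  rw [eqToHom_comp_iff, comp_eqToHom_iff] at h
  unfold ehE rM
  rw [h]
  simp only [tensor_eqToHom, tensor_eqToHom_comp_left, tensor_comp_eqToHom_left,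
    tensor_eqToHom_comp_right, tensor_comp_eqToHom_right, tensor_eqToHom_left,
    tensor_eqToHom_right, Category.assoc, Category.id_comp, Category.comp_id,
    eqToHom_trans, eqToHom_trans_assoc, eqToHom_refl, M.tensor_id, N.tensor_id]

include δu₃ δassocM in
lemma K3 (A B P : C) :
    M.tensorHom (𝟙 A) (ehE M N hI δ B P) ≫ qM M N hI δ A B P =
      eqToHom (M.assoc_obj A P B).symm ≫ M.tensorHom (ehD1 M N hI δ A P) (𝟙 B) ≫
        rM M N hI δ A B P := by
  have h := (δassocM A M.unit M.unit P B M.unit).symm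
  rw [deltaCongr δ (M.unit_right A) (M.unit_left P) rfl rfl] at h
  rw [deltaCongr δ rfl rfl (M.unit_left B) (M.unit_right P)] at h
  rw [tensor_id_congr_right M (NunitR M N hI B)] at h
  rw [tensor_id_congr_left M (NunitR M N hI A)] at h
  simp only [tensor_eqToHom, tensor_eqToHom_comp_left, tensor_comp_eqToHom_left,
    tensor_eqToHom_comp_right, tensor_comp_eqToHom_right, tensor_eqToHom_left,
    tensor_eqToHom_right, Category.assoc, Category.id_comp, Category.comp_id,
    eqToHom_trans, eqToHom_trans_assoc, eqToHom_refl, M.tensor_id, N.tensor_id] at h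
  rw [← cancel_mono (eqToHom (show N.tensorObj (M.tensorObj A B) P =
      N.tensorObj (M.tensorObj (M.tensorObj A M.unit) B)
        (M.tensorObj (M.tensorObj M.unit P) M.unit) by
      rw [M.unit_right, M.unit_left, M.unit_right]))]
  rw [← cancel_epi (eqToHom (show M.tensorObj
      (M.tensorObj (N.tensorObj A M.unit) (N.tensorObj M.unit P)) (N.tensorObj B M.unit) =
      M.tensorObj A (M.tensorObj P B) by
      rw [NunitR M N hI, NunitL M N hI, NunitR M N hI, M.assoc_obj]))]
  unfold ehE ehD1 qM rM
  simp only [tensor_eqToHom, tensor_eqToHom_comp_left, tensor_comp_eqToHom_left,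
    tensor_eqToHom_comp_right, tensor_comp_eqToHom_right, tensor_eqToHom_left,
    tensor_eqToHom_right, Category.assoc, Category.id_comp, Category.comp_id,
    eqToHom_trans, eqToHom_trans_assoc, eqToHom_refl, M.tensor_id, N.tensor_id]
  exact h

include δu₄ δassocM in
lemma K1' (A B P : C) :
    ehD1 M N hI δ A (M.tensorObj B P) =
      eqToHom (M.assoc_obj A B P).symm ≫ M.tensorHom (ehD1 M N hI δ A B) (𝟙 P) ≫
        sM M N hI δ A B P := by
  have h := (δassocM A M.unit M.unit B M.unit P).symm
  rw [δu₄ B P] at h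
  rw [deltaCongr δ rfl rfl (M.unit_left M.unit) rfl] at h
  rw [deltaCongr δ (M.unit_right A) (M.unit_left B) rfl rfl] at h
  rw [tensor_id_congr_right M (NunitL M N hI P)] at h
  simp only [tensor_eqToHom, tensor_eqToHom_comp_left, tensor_comp_eqToHom_left,
    tensor_eqToHom_comp_right, tensor_comp_eqToHom_right, tensor_eqToHom_left,
    tensor_eqToHom_right, Category.assoc, Category.id_comp, Category.comp_id,
    eqToHom_trans, eqToHom_trans_assoc, eqToHom_refl, M.tensor_id, N.tensor_id] at h
  rw [eqToHom_comp_iff, comp_eqToHom_iff] at h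
  unfold ehD1 sM
  rw [h]
  simp only [tensor_eqToHom, tensor_eqToHom_comp_left, tensor_comp_eqToHom_left,
    tensor_eqToHom_comp_right, tensor_comp_eqToHom_right, tensor_eqToHom_left,
    tensor_eqToHom_right, Category.assoc, Category.id_comp, Category.comp_id,
    eqToHom_trans, eqToHom_trans_assoc, eqToHom_refl, M.tensor_id, N.tensor_id]

include δu₄ δassocM in
lemma K2' (A B P : C) :
    ehE M N hI δ A (M.tensorObj B P) =
      eqToHom (M.assoc_obj B P A) ≫ M.tensorHom (𝟙 B) (ehE M N hI δ A P) ≫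
        tM M N hI δ A B P := by
  have h := δassocM M.unit B M.unit P A M.unit
  rw [δu₄ B P] at h
  rw [deltaCongr δ (M.unit_left M.unit) rfl rfl rfl] at h
  rw [deltaCongr δ rfl rfl (M.unit_left A) (M.unit_right P)] at h
  rw [tensor_id_congr_left M (NunitL M N hI B)] at h
  simp only [tensor_eqToHom, tensor_eqToHom_comp_left, tensor_comp_eqToHom_left,
    tensor_eqToHom_comp_right, tensor_comp_eqToHom_right, tensor_eqToHom_left,
    tensor_eqToHom_right, Category.assoc, Category.id_comp, Category.comp_id,
    eqToHom_trans, eqToHom_trans_assoc, eqToHom_refl, M.tensor_id, N.tensor_id] at h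
  rw [eqToHom_comp_iff, comp_eqToHom_iff] at h
  unfold ehE tM
  rw [h]
  simp only [tensor_eqToHom, tensor_eqToHom_comp_left, tensor_comp_eqToHom_left,
    tensor_eqToHom_comp_right, tensor_comp_eqToHom_right, tensor_eqToHom_left,
    tensor_eqToHom_right, Category.assoc, Category.id_comp, Category.comp_id,
    eqToHom_trans, eqToHom_trans_assoc, eqToHom_refl, M.tensor_id, N.tensor_id]

include δu₄ δassocM in
lemma K3' (A B P : C) :
    M.tensorHom (ehE M N hI δ A B) (𝟙 P) ≫ sM M N hI δ A B P =
      eqToHom (M.assoc_obj B A P) ≫ M.tensorHom (𝟙 B) (ehD1 M N hI δ A P) ≫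
        tM M N hI δ A B P := by
  have h := δassocM M.unit B A M.unit M.unit P
  rw [deltaCongr δ (M.unit_left A) (M.unit_right B) rfl rfl] at h
  rw [deltaCongr δ rfl rfl (M.unit_right A) (M.unit_left P)] at h
  rw [tensor_id_congr_right M (NunitL M N hI P)] at h
  rw [tensor_id_congr_left M (NunitL M N hI B)] at h
  simp only [tensor_eqToHom, tensor_eqToHom_comp_left, tensor_comp_eqToHom_left,
    tensor_eqToHom_comp_right, tensor_comp_eqToHom_right, tensor_eqToHom_left,
    tensor_eqToHom_right, Category.assoc, Category.id_comp, Category.comp_id,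
    eqToHom_trans, eqToHom_trans_assoc, eqToHom_refl, M.tensor_id, N.tensor_id] at h
  rw [← cancel_mono (eqToHom (show N.tensorObj A (M.tensorObj B P) =
      N.tensorObj (M.tensorObj (M.tensorObj M.unit A) M.unit)
        (M.tensorObj (M.tensorObj B M.unit) P) by
      rw [M.unit_left, M.unit_right, M.unit_right]))]
  rw [← cancel_epi (eqToHom (show M.tensorObj
      (M.tensorObj (N.tensorObj M.unit B) (N.tensorObj A M.unit)) (N.tensorObj M.unit P) =
      M.tensorObj (M.tensorObj B A) P by
      rw [NunitL M N hI, NunitR M N hI, NunitL M N hI]))]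
  unfold ehE ehD1 sM tM
  simp only [tensor_eqToHom, tensor_eqToHom_comp_left, tensor_comp_eqToHom_left,
    tensor_eqToHom_comp_right, tensor_comp_eqToHom_right, tensor_eqToHom_left,
    tensor_eqToHom_right, Category.assoc, Category.id_comp, Category.comp_id,
    eqToHom_trans, eqToHom_trans_assoc, eqToHom_refl, M.tensor_id, N.tensor_id]
  exact h

include δu₃ δassocM in
lemma hex1 (A B P : C) :
    ehGamma M N hI δ (M.tensorObj A B) P =
      eqToHom (M.assoc_obj A B P) ≫
        M.tensorHom (𝟙 A) (ehGamma M N hI δ B P) ≫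
          eqToHom (M.assoc_obj A P B).symm ≫
            M.tensorHom (ehGamma M N hI δ A P) (𝟙 B) ≫
              eqToHom (M.assoc_obj P A B) := by
  haveI := ehE_isIso M N hI δ (M.tensorObj A B) P
  rw [← cancel_mono (ehE M N hI δ (M.tensorObj A B) P), gamma_comp_ehE,
    K1 M N hI δ δu₃ δassocM A B P]
  conv_rhs => rw [K2 M N hI δ δu₃ δassocM A B P]
  simp only [Category.assoc, eqToHom_trans, eqToHom_trans_assoc, eqToHom_refl,
    Category.id_comp, Category.comp_id]
  have hc1 : M.tensorHom (ehGamma M N hI δ A P) (𝟙 B) ≫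
      M.tensorHom (ehE M N hI δ A P) (𝟙 B) = M.tensorHom (ehD1 M N hI δ A P) (𝟙 B) := by
    rw [← M.tensor_comp, gamma_comp_ehE, Category.comp_id]
  rw [reassoc_of% hc1, ← K3 M N hI δ δu₃ δassocM A B P]
  have hc2 : M.tensorHom (𝟙 A) (ehGamma M N hI δ B P) ≫
      M.tensorHom (𝟙 A) (ehE M N hI δ B P) = M.tensorHom (𝟙 A) (ehD1 M N hI δ B P) := by
    rw [← M.tensor_comp, gamma_comp_ehE, Category.comp_id]
  rw [reassoc_of% hc2]

include δu₄ δassocM in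
lemma hex2 (A B P : C) :
    ehGamma M N hI δ A (M.tensorObj B P) =
      eqToHom (M.assoc_obj A B P).symm ≫
        M.tensorHom (ehGamma M N hI δ A B) (𝟙 P) ≫
          eqToHom (M.assoc_obj B A P) ≫
            M.tensorHom (𝟙 B) (ehGamma M N hI δ A P) ≫
              eqToHom (M.assoc_obj B P A).symm := by
  haveI := ehE_isIso M N hI δ A (M.tensorObj B P)
  rw [← cancel_mono (ehE M N hI δ A (M.tensorObj B P)), gamma_comp_ehE,
    K1' M N hI δ δu₄ δassocM A B P]
  conv_rhs => rw [K2' M N hI δ δu₄ δassocM A B P]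
  simp only [Category.assoc, eqToHom_trans, eqToHom_trans_assoc, eqToHom_refl,
    Category.id_comp, Category.comp_id]
  have hc1 : M.tensorHom (𝟙 B) (ehGamma M N hI δ A P) ≫
      M.tensorHom (𝟙 B) (ehE M N hI δ A P) = M.tensorHom (𝟙 B) (ehD1 M N hI δ A P) := by
    rw [← M.tensor_comp, gamma_comp_ehE, Category.comp_id]
  rw [reassoc_of% hc1, ← K3' M N hI δ δu₄ δassocM A B P]
  have hc2 : M.tensorHom (ehGamma M N hI δ A B) (𝟙 P) ≫
      M.tensorHom (ehE M N hI δ A B) (𝟙 P) = M.tensorHom (ehD1 M N hI δ A B) (𝟙 P) := by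
    rw [← M.tensor_comp, gamma_comp_ehE, Category.comp_id]
  rw [reassoc_of% hc2]

end Assoc

end Core
/-- **The categorified Eckmann–Hilton argument.** A category carrying two compatible
strict monoidal structures `⊗` (`M`) and `Φ` (`N`) with the same unit, related by a
coherent interchange family `δ`, is braided: the morphisms `δ_{A,I,I,B}` form a natural
isomorphism `⊗ ⟹ Φ`, and `γ_{A,B} = δ_{I,B,A,I}⁻¹ ∘ δ_{A,I,I,B}` is a braiding on
`(C, ⊗, I)`. -/
theorem eckmann_hilton_braiding (M N : StrictMonoidalStruct C) (hI : N.unit = M.unit)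
    (δ : ∀ A B P R : C,
      M.tensorObj (N.tensorObj A B) (N.tensorObj P R) ≅
        N.tensorObj (M.tensorObj A P) (M.tensorObj B R))
    (δnat : ∀ {A A' B B' P P' R R' : C} (f : A ⟶ A') (g : B ⟶ B')
      (h : P ⟶ P') (k : R ⟶ R'),
      M.tensorHom (N.tensorHom f g) (N.tensorHom h k) ≫ (δ A' B' P' R').hom =
        (δ A B P R).hom ≫ N.tensorHom (M.tensorHom f h) (M.tensorHom g k))
    (δu₁ : ∀ A B : C, (δ A B M.unit M.unit).hom =
      eqToHom (by
        rw [M.unit_right, M.unit_right]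
        have h1 : N.tensorObj M.unit M.unit = N.unit := by
          rw [← hI]; exact N.unit_left _
        rw [h1, hI, M.unit_right]))
    (δu₂ : ∀ A B : C, (δ M.unit M.unit A B).hom =
      eqToHom (by
        rw [M.unit_left, M.unit_left]
        have h1 : N.tensorObj M.unit M.unit = N.unit := by
          rw [← hI]; exact N.unit_left _
        rw [h1, hI, M.unit_left]))
    (δu₃ : ∀ A B : C, (δ A M.unit B M.unit).hom =
      eqToHom (by
        have h2 : ∀ X : C, N.tensorObj X M.unit = X := fun X => by
          rw [← hI]; exact N.unit_right X
        rw [h2, h2, M.unit_left, h2]))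
    (δu₄ : ∀ A B : C, (δ M.unit A M.unit B).hom =
      eqToHom (by
        have h3 : ∀ X : C, N.tensorObj M.unit X = X := fun X => by
          rw [← hI]; exact N.unit_left X
        rw [h3, h3, M.unit_left, h3]))
    (δassocM : ∀ A B P R E F : C,
      M.tensorHom (δ A B P R).hom (𝟙 (N.tensorObj E F)) ≫
          (δ (M.tensorObj A P) (M.tensorObj B R) E F).hom =
        eqToHom (M.assoc_obj (N.tensorObj A B) (N.tensorObj P R) (N.tensorObj E F)) ≫
          M.tensorHom (𝟙 (N.tensorObj A B)) (δ P R E F).hom ≫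
            (δ A B (M.tensorObj P E) (M.tensorObj R F)).hom ≫
              eqToHom (by rw [M.assoc_obj, M.assoc_obj]))
    (δassocN : ∀ A B P R E F : C,
      N.tensorHom (δ A P B R).inv (𝟙 (M.tensorObj E F)) ≫
          (δ (N.tensorObj A P) E (N.tensorObj B R) F).inv =
        eqToHom (N.assoc_obj (M.tensorObj A B) (M.tensorObj P R) (M.tensorObj E F)) ≫
          N.tensorHom (𝟙 (M.tensorObj A B)) (δ P E R F).inv ≫
            (δ A (N.tensorObj P E) B (N.tensorObj R F)).inv ≫
              eqToHom (by rw [N.assoc_obj, N.assoc_obj])) :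
    -- (i) the morphisms `δ_{A,I,I,B} : A ⊗ B ⟶ A Φ B` constitute a natural isomorphism
    -- between the two tensor product functors
    ((∀ A B : C, IsIso (ehD1 M N hI δ A B)) ∧
      (∀ {A A' B B' : C} (f : A ⟶ A') (g : B ⟶ B'),
        M.tensorHom f g ≫ ehD1 M N hI δ A' B' = ehD1 M N hI δ A B ≫ N.tensorHom f g)) ∧
    -- (ii) `γ` is a braiding on `(C, ⊗, I)`
    ((∀ A B : C, IsIso (ehGamma M N hI δ A B)) ∧
      (∀ {A A' B B' : C} (f : A ⟶ A') (g : B ⟶ B'),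
        M.tensorHom f g ≫ ehGamma M N hI δ A' B' =
          ehGamma M N hI δ A B ≫ M.tensorHom g f) ∧
      (∀ A B P : C,
        ehGamma M N hI δ (M.tensorObj A B) P =
          eqToHom (M.assoc_obj A B P) ≫
            M.tensorHom (𝟙 A) (ehGamma M N hI δ B P) ≫
              eqToHom (M.assoc_obj A P B).symm ≫
                M.tensorHom (ehGamma M N hI δ A P) (𝟙 B) ≫
                  eqToHom (M.assoc_obj P A B)) ∧
      (∀ A B P : C,
        ehGamma M N hI δ A (M.tensorObj B P) =
          eqToHom (M.assoc_obj A B P).symm ≫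
            M.tensorHom (ehGamma M N hI δ A B) (𝟙 P) ≫
              eqToHom (M.assoc_obj B A P) ≫
                M.tensorHom (𝟙 B) (ehGamma M N hI δ A P) ≫
                  eqToHom (M.assoc_obj B P A).symm)) := by
  refine ⟨⟨fun A B => ehD1_isIso M N hI δ A B,
      fun {A A' B B'} f g => d1_nat M N hI δ @δnat f g⟩,
    fun A B => ehGamma_isIso M N hI δ A B,
    fun {A A' B B'} f g => gamma_nat M N hI δ @δnat f g,
    fun A B P => hex1 M N hI δ δu₃ δassocM A B P,
    fun A B P => hex2 M N hI δ δu₄ δassocM A B P⟩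

end EH
end

section
/- A braiding compatible with the middle-four interchange is a symmetry: let (C, ⊗, I) be a braided monoidal category with braiding β, and suppose that for all objects A, A', B, B' the interchange square commutes, i.e. u_{A',A,B',B} ∘ (β_{A,A'} ⊗ β_{B,B'}) = β_{A⊗B, A'⊗B'} ∘ u_{A,A',B,B'}, where u denotes the middle-four interchange isomorphism. Then the braiding is a symmetry: β_{B,A} ∘ β_{A,B} = id_{A⊗B} for all objects A, B. -/
open CategoryTheory MonoidalCategory

universe v u

/-- A braiding compatible with the middle-four interchange is a symmetry: if in a
braided monoidal category the interchange square
`u_{A',A,B',B} ∘ (β_{A,A'} ⊗ β_{B,B'}) = β_{A⊗B,A'⊗B'} ∘ u_{A,A',B,B'}` commutes for all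
objects (where `u = tensorμ` is the middle-four interchange isomorphism), then
`β_{B,A} ∘ β_{A,B} = id` for all objects `A`, `B`. -/
theorem braiding_interchange_symmetry {C : Type u} [Category.{v} C]
    [MonoidalCategory C] [BraidedCategory C]
    (h : ∀ A A' B B' : C,
      ((β_ A A').hom ⊗ₘ (β_ B B').hom) ≫ tensorμ A' A B' B =
        tensorμ A A' B B' ≫ (β_ (A ⊗ B) (A' ⊗ B')).hom) :
    ∀ A B : C, (β_ A B).hom ≫ (β_ B A).hom = 𝟙 (A ⊗ B) := by
  intro A B
  have h1 : tensorμ A (𝟙_ C) (𝟙_ C) B = 𝟙 _ := by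
    rw [tensorμ, braiding_tensorUnit_left]; monoidal
  have h2 : tensorμ (𝟙_ C) A B (𝟙_ C) =
      ((λ_ A).hom ⊗ₘ (ρ_ B).hom) ≫ (β_ A B).hom ≫ ((λ_ B).inv ⊗ₘ (ρ_ A).inv) := by
    rw [tensorμ]; monoidal
  have H := h (𝟙_ C) A B (𝟙_ C)
  rw [h1, h2, braiding_tensorUnit_left,
    braiding_tensorUnit_right, Category.comp_id] at H
  have H2 := congrArg (· ≫ ((ρ_ A).hom ⊗ₘ (λ_ B).hom)) H
  rw [Category.assoc, Category.assoc, Category.assoc,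
    ← BraidedCategory.braiding_naturality] at H2
  simp only [tensorHom_comp_tensorHom_assoc, tensorHom_comp_tensorHom, Category.assoc,
    Iso.inv_hom_id, Iso.inv_hom_id_assoc, Category.comp_id, Category.id_comp,
    id_tensorHom_id] at H2
  rw [← cancel_epi ((λ_ A).hom ⊗ₘ (ρ_ B).hom), Category.comp_id]
  exact H2.symm
end
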